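/- The maps λ and τ are mutually inverse bijections between the set of Łukasiewicz paths and the set of plane trees: for every plane tree T, τ(λ(T)) = T, and for every Łukasiewicz path P, λ(τ(P)) = P. -/

import Mathlib

/-! ## Plane trees -/

/-- A plane tree: a root together with an ordered (left-to-right) list of subtrees.
A node is a *leaf* if it has no children, and *internal* otherwise. -/
inductive PTree : Type where
  | node : List PTree → PTree


namespace Luka

/-! ## Łukasiewicz paths

A path is encoded by its list of step increments: the step `(1,k)` (an up-step `U_k` of
degree `k`) is encoded by `k : ℤ` with `k ≥ 0`, and the down step `D = (1,-1)` by `-1`. -/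

/-- `P` is a Łukasiewicz path: it is nonempty, uses steps `(1,k)` with `k ≥ -1`,
stays (weakly) above the `x`-axis before its last step, and ends at height `-1`
(so that it goes strictly below the axis only at the last step, which is forced
to be the down-step `D`). -/
def IsLukas (P : List ℤ) : Prop :=
  P ≠ [] ∧ (∀ s ∈ P, -1 ≤ s) ∧ (∀ n, n < P.length → 0 ≤ (P.take n).sum) ∧ P.sum = -1

/-- The degrees of the up-steps of `P`, from left to right (the *profile* of `P`). -/
def upDegs (P : List ℤ) : List ℕ := (P.filter (fun s => 0 ≤ s)).map Int.toNat

/-- The profile multiset `𝔐(P)`: the multiset of degrees of the up-steps of `P`. -/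
def profileM (P : List ℤ) : Multiset ℕ := (upDegs P : Multiset ℕ)

/-- The degree of the first up-step of `P`, if any. -/
def firstUp? (P : List ℤ) : Option ℕ := (upDegs P).head?

/-- The degree of the last up-step of `P`, if any. -/
def lastUp? (P : List ℤ) : Option ℕ := (upDegs P).getLast?

/-- Auxiliary: starting from height `h`, record the starting height of every up-step. -/
def areaVecAux : ℤ → List ℤ → List ℤ
  | _, [] => []
  | h, s :: rest => (if 0 ≤ s then [h] else []) ++ areaVecAux (h + s) rest

/-- The area vector `Area(P)`: the `i`-th entry is the `y`-coordinate of the starting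
point of the `i`-th up-step of `P`. -/
def areaVec (P : List ℤ) : List ℤ := areaVecAux 0 P

/-- `area(P)`: the sum of the entries of the area vector (entries of a Łukasiewicz
path are nonnegative, so taking `Int.toNat` entrywise is harmless). -/
def area (P : List ℤ) : ℕ := ((areaVec P).map Int.toNat).sum

/-- Auxiliary computation of the depth values: `cur` is the depth value of the previous
step (`0` initially), and `stack` holds the pending depth values of the future matching
down-steps (top of the stack = value for the next matching down-step to come).
Reading an up-step `U_k` whose value is `cur` (inherited from the previous step) pushes
the values `cur+1, …, cur+k` for its `k` matching down-steps (its first matching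
down-step, which crosses its topmost interior level, gets `cur+1`, etc.); reading a
down-step pops its value.  The list returned records the value `d_i` of each up-step,
from left to right. -/
def depthVecAux : ℕ → List ℕ → List ℤ → List ℕ
  | _, _, [] => []
  | cur, stack, s :: rest =>
    if 0 ≤ s then
      cur :: depthVecAux cur ((List.range s.toNat).map (fun i => cur + i + 1) ++ stack) rest
    else
      match stack with
      | [] => depthVecAux cur [] rest
      | v :: st => depthVecAux v st rest

/-- The depth vector `Depth(P)`: the values `d_i` at the up-steps of `P`, left to right. -/
def depthVec (P : List ℤ) : List ℕ := depthVecAux 0 [] P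

/-- `depth(P)`: the sum of the entries of the depth vector. -/
def depth (P : List ℤ) : ℕ := (depthVec P).sum

/-- `P ∈ 𝓛_M`. -/
def MemL (M : Multiset ℕ) (P : List ℤ) : Prop := IsLukas P ∧ profileM P = M

/-- `P ∈ 𝓛_{a,M}`: first up-step of degree `a`, profile multiset `M ⊎ {a}`. -/
def MemLa (a : ℕ) (M : Multiset ℕ) (P : List ℤ) : Prop :=
  IsLukas P ∧ firstUp? P = some a ∧ profileM P = a ::ₘ M

/-- `P ∈ 𝓛_{M,b}`: last up-step of degree `b`, profile multiset `M ⊎ {b}`. -/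
def MemLb (M : Multiset ℕ) (b : ℕ) (P : List ℤ) : Prop :=
  IsLukas P ∧ lastUp? P = some b ∧ profileM P = b ::ₘ M

/-- `P ∈ 𝓛_{a,M,b}`: first up-step of degree `a`, last up-step of degree `b`,
profile multiset `M ⊎ {a, b}`. -/
def MemLab (a : ℕ) (M : Multiset ℕ) (b : ℕ) (P : List ℤ) : Prop :=
  IsLukas P ∧ firstUp? P = some a ∧ lastUp? P = some b ∧ profileM P = a ::ₘ b ::ₘ M

/-! ## Plane-tree statistics -/

/-- The (ordered) children of the root of a plane tree. -/
def children : PTree → List PTree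
  | .node ts => ts

/-- The degree of (the root of) a plane tree: its number of children. -/
def numChildren (t : PTree) : ℕ := (children t).length

mutual
/-- Number of internal nodes of a plane tree. -/
def internCount : PTree → ℕ
  | .node [] => 0
  | .node (t :: ts) => 1 + internCountL (t :: ts)
def internCountL : List PTree → ℕ
  | [] => 0
  | t :: ts => internCount t + internCountL ts
end

mutual
/-- `lthornT T` = the sum of `lthorn(u)` over all internal nodes `u` of `T`, where
`lthorn(u)` is the number of descending edges of strict ancestors `v` of `u` lying to
the left of the path from `v` to `u`.  (Every internal node of the subtree rooted at
the `i`-th child (0-indexed) of a node gains `i` left thorns from that node.) -/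
def lthornT : PTree → ℕ
  | .node ts => lthornL 0 ts
def lthornL : ℕ → List PTree → ℕ
  | _, [] => 0
  | i, t :: ts => lthornT t + i * internCount t + lthornL (i + 1) ts
end

mutual
/-- `rthornT T` = the sum of `rthorn(u)` over all internal nodes `u` of `T`, where
`rthorn(u)` is the number of descending edges of strict ancestors `v` of `u` lying to
the right of the path from `v` to `u`. -/
def rthornT : PTree → ℕ
  | .node ts => rthornL ts
def rthornL : List PTree → ℕ
  | [] => 0
  | t :: ts => rthornT t + ts.length * internCount t + rthornL ts
end

mutual
/-- The list of the values `lthorn(u)` for the internal nodes `u` of `T`, in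
contour-walk (preorder) order. -/
def lthornList : PTree → List ℕ
  | .node [] => []
  | .node (t :: ts) => 0 :: lthornLL 0 (t :: ts)
def lthornLL : ℕ → List PTree → List ℕ
  | _, [] => []
  | i, t :: ts => (lthornList t).map (· + i) ++ lthornLL (i + 1) ts
end

mutual
/-- The list of the values `rthorn(u)` for the internal nodes `u` of `T`, in
contour-walk (preorder) order. -/
def rthornList : PTree → List ℕ
  | .node [] => []
  | .node (t :: ts) => 0 :: rthornLL (t :: ts)
def rthornLL : List PTree → List ℕ
  | [] => []
  | t :: ts => (rthornList t).map (· + ts.length) ++ rthornLL ts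
end

/-! ## The bijections `λ` and `τ` -/

mutual
/-- `λ`: record each node of the tree at its first visit in the left-to-right contour
walk: `U_k` (i.e. `k`) for an internal node with `k+1` children, `D` (i.e. `-1`)
for a leaf. -/
def lambdaT : PTree → List ℤ
  | .node ts => ((ts.length : ℤ) - 1) :: lambdaL ts
def lambdaL : List PTree → List ℤ
  | [] => []
  | t :: ts => lambdaT t ++ lambdaL ts
end

/-- Auxiliary for `τ`: reading the path from right to left, maintain the stack of the
already-built subtrees (in left-to-right order); a down-step `D` creates a leaf and an
up-step `U_k` grabs the `k+1` topmost subtrees as its children.  This builds the same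
tree as the left-to-right "leftmost bud" construction. -/
def tauStack (P : List ℤ) : List PTree :=
  P.foldr (fun s st =>
    if s < 0 then PTree.node [] :: st
    else PTree.node (st.take (s.toNat + 1)) :: st.drop (s.toNat + 1)) []

/-- `τ`: the plane tree associated with a Łukasiewicz path. -/
def tau (P : List ℤ) : PTree := (tauStack P).headD (.node [])

mutual
/-- The mirror of a plane tree: reverse the left-to-right order of the children of
every internal node. -/
def mir : PTree → PTree
  | .node ts => .node (mirL ts).reverse
def mirL : List PTree → List PTree
  | [] => []
  | t :: ts => mir t :: mirL ts
end

mutual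
/-- The subtrees rooted at the internal nodes of `T`, in contour-walk (preorder)
order. -/
def internalSubtrees : PTree → List PTree
  | .node [] => []
  | .node (t :: ts) => .node (t :: ts) :: internalSubtreesL (t :: ts)
def internalSubtreesL : List PTree → List PTree
  | [] => []
  | t :: ts => internalSubtrees t ++ internalSubtreesL ts
end

/-- The multiset of degrees of the non-root internal nodes of `T`. -/
def nonRootInternalDegs (T : PTree) : Multiset ℕ :=
  (((internalSubtreesL (children T)).map numChildren : List ℕ) : Multiset ℕ)

/-! ## Lodestars and the lodestar swap -/

/-- A node is a lodestar-type node if it is internal and all its children are leaves. -/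
def isLodestarNode (t : PTree) : Bool :=
  !(children t).isEmpty && (children t).all (fun c => (children c).isEmpty)

mutual
/-- The subtree rooted at the *left lodestar* of `T`: the first internal node, in
contour-walk (preorder) order, all of whose children are leaves (if it exists). -/
def leftLode? : PTree → Option PTree
  | .node ts =>
    if isLodestarNode (.node ts) then some (.node ts) else leftLodeL? ts
def leftLodeL? : List PTree → Option PTree
  | [] => none
  | t :: ts =>
    match leftLode? t with
    | some r => some r
    | none => leftLodeL? ts
end

mutual
/-- The subtree rooted at the *right lodestar* of `T`: the last internal node, in
contour-walk (preorder) order, all of whose children are leaves (if it exists). -/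
def rightLode? : PTree → Option PTree
  | .node ts =>
    match rightLodeL? ts with
    | some r => some r
    | none => if isLodestarNode (.node ts) then some (.node ts) else none
def rightLodeL? : List PTree → Option PTree
  | [] => none
  | t :: ts =>
    match rightLodeL? ts with
    | some r => some r
    | none => rightLode? t
end

mutual
/-- Replace the left lodestar of `T` (first preorder all-leaf-children internal node)
by the tree `r`; `none` if `T` has no internal node. -/
def replF : PTree → PTree → Option PTree
  | r, .node ts =>
    if isLodestarNode (.node ts) then some r
    else (replFL r ts).map PTree.node
def replFL : PTree → List PTree → Option (List PTree)
  | _, [] => none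
  | r, t :: ts =>
    match replF r t with
    | some t' => some (t' :: ts)
    | none => (replFL r ts).map (t :: ·)
end

mutual
/-- Replace the right lodestar of `T` (last preorder all-leaf-children internal node)
by the tree `r`; `none` if `T` has no internal node. -/
def replL : PTree → PTree → Option PTree
  | r, .node ts =>
    match replLL r ts with
    | some ts' => some (.node ts')
    | none => if isLodestarNode (.node ts) then some r else none
def replLL : PTree → List PTree → Option (List PTree)
  | _, [] => none
  | r, t :: ts =>
    match replLL r ts with
    | some ts' => some (t :: ts')
    | none => (replL r t).map (· :: ts)
end

/-- The lodestar swap: exchange the subtrees rooted at the left lodestar and the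
right lodestar of `T` (each a node together with its pendant leaves). -/
def lodeSwap (T : PTree) : PTree :=
  match leftLode? T, rightLode? T with
  | some L, some R => ((replF R T).bind (replL L)).getD T
  | _, _ => T

end Luka


/-! The Łukasiewicz condition is read off suffixes: a path whose proper prefixes have nonnegative
sums and whose total is `-1` is exactly one all of whose nonempty suffixes have negative sums.
A suffix with sum `-m` is the λ-word of a forest of `m` trees, and this is precisely what makes
the right-to-left stack construction `τ` well defined: when an up-step `U_k` is read, the suffix
after it has sum `≤ -(k+1)`, so the stack holds at least the `k+1` subtrees it needs.  Since
`λ` is a preorder serialization, `τ` rebuilds every tree from its word, and on a Łukasiewicz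
path the stack ends with a single tree whose word is the path. -/

namespace Luka

def NegSuffixSums (P : List ℤ) : Prop := ∀ n < P.length, (P.drop n).sum < 0

theorem NegSuffixSums.cons {s : ℤ} {P : List ℤ} (hP : NegSuffixSums P) (hs : s + P.sum < 0) :
    NegSuffixSums (s :: P) := by
  rintro (_ | n) hn
  · simpa using hs
  · exact hP n (by simpa using hn)

theorem NegSuffixSums.append {A B : List ℤ} (hA : NegSuffixSums A) (hB : NegSuffixSums B)
    (hBsum : B.sum ≤ 0) : NegSuffixSums (A ++ B) := by
  intro n hn
  rw [List.drop_append, List.sum_append]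
  by_cases hnA : n < A.length
  · rw [Nat.sub_eq_zero_of_le hnA.le, List.drop_zero]
    linarith [hA n hnA]
  · rw [List.drop_of_length_le (not_lt.mp hnA), List.sum_nil, zero_add]
    exact hB _ (by simp only [List.length_append] at hn; omega)

theorem isLukas_iff (P : List ℤ) :
    IsLukas P ↔ P ≠ [] ∧ (∀ s ∈ P, -1 ≤ s) ∧ NegSuffixSums P ∧ P.sum = -1 := by
  have hsplit (n : ℕ) : (P.take n).sum = P.sum - (P.drop n).sum := by
    rw [← List.sum_take_add_sum_drop P n]; ring
  refine and_congr_right fun _ => and_congr_right fun _ => ⟨fun ⟨hpre, hsum⟩ => ?_, ?_⟩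
  · exact ⟨fun n hn => by linarith [hpre n hn, hsplit n], hsum⟩
  · rintro ⟨hneg, hsum⟩
    exact ⟨fun n hn => by linarith [hneg n hn, hsplit n], hsum⟩

theorem lambdaL_append (A B : List PTree) : lambdaL (A ++ B) = lambdaL A ++ lambdaL B := by
  induction A with
  | nil => rfl
  | cons a A ih => rw [List.cons_append, lambdaL, lambdaL, ih, List.append_assoc]

mutual
theorem sum_lambdaT : ∀ T : PTree, (lambdaT T).sum = -1
  | .node ts => by rw [lambdaT, List.sum_cons, sum_lambdaL ts]; ring
theorem sum_lambdaL : ∀ ts : List PTree, (lambdaL ts).sum = -ts.length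
  | [] => rfl
  | t :: ts => by
    rw [lambdaL, List.sum_append, sum_lambdaT t, sum_lambdaL ts, List.length_cons]
    push_cast; ring
end

mutual
theorem neg_one_le_of_mem_lambdaT : ∀ T : PTree, ∀ s ∈ lambdaT T, -1 ≤ s
  | .node ts, s, hs => by
    rcases List.mem_cons.mp hs with rfl | hs
    · omega
    · exact neg_one_le_of_mem_lambdaL ts s hs
theorem neg_one_le_of_mem_lambdaL : ∀ ts : List PTree, ∀ s ∈ lambdaL ts, -1 ≤ s
  | [], _, hs => nomatch hs
  | t :: ts, s, hs => by
    rcases List.mem_append.mp hs with hs | hs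
    · exact neg_one_le_of_mem_lambdaT t s hs
    · exact neg_one_le_of_mem_lambdaL ts s hs
end

mutual
theorem negSuffixSums_lambdaT : ∀ T : PTree, NegSuffixSums (lambdaT T)
  | .node ts => by
    rw [lambdaT]
    exact (negSuffixSums_lambdaL ts).cons (by rw [sum_lambdaL]; omega)
theorem negSuffixSums_lambdaL : ∀ ts : List PTree, NegSuffixSums (lambdaL ts)
  | [] => fun _ hn => nomatch hn
  | t :: ts => by
    rw [lambdaL]
    exact (negSuffixSums_lambdaT t).append (negSuffixSums_lambdaL ts)
      (by rw [sum_lambdaL]; omega)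
end

theorem isLukas_lambdaT (T : PTree) : IsLukas (lambdaT T) := by
  obtain ⟨ts⟩ := T
  exact (isLukas_iff _).mpr ⟨List.cons_ne_nil _ _, neg_one_le_of_mem_lambdaT _,
    negSuffixSums_lambdaT _, sum_lambdaT _⟩

def tauStep (s : ℤ) (st : List PTree) : List PTree :=
  if s < 0 then PTree.node [] :: st
  else PTree.node (st.take (s.toNat + 1)) :: st.drop (s.toNat + 1)

theorem tauStack_eq_foldr (P : List ℤ) : tauStack P = P.foldr tauStep [] := rfl

mutual
theorem foldr_tauStep_lambdaT :
    ∀ (T : PTree) (st : List PTree), (lambdaT T).foldr tauStep st = T :: st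
  | .node ts, st => by
    rw [lambdaT, List.foldr_cons, foldr_tauStep_lambdaL ts st]
    cases ts with
    | nil => rfl
    | cons t ts =>
      have hpos : ¬ (((t :: ts).length : ℤ) - 1 < 0) := by simp
      have hk : (((t :: ts).length : ℤ) - 1).toNat + 1 = (t :: ts).length := by simp
      rw [tauStep, if_neg hpos, hk, List.take_left, List.drop_left]
theorem foldr_tauStep_lambdaL :
    ∀ (ts st : List PTree), (lambdaL ts).foldr tauStep st = ts ++ st
  | [], _ => rfl
  | t :: ts, st => by
    rw [lambdaL, List.foldr_append, foldr_tauStep_lambdaL ts st, foldr_tauStep_lambdaT t]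
    rfl
end

theorem tau_lambdaT (T : PTree) : tau (lambdaT T) = T := by
  rw [tau, tauStack_eq_foldr, foldr_tauStep_lambdaT T []]
  rfl

theorem length_tauStep {s : ℤ} (hs : -1 ≤ s) {st : List PTree} (hst : s < st.length) :
    ((tauStep s st).length : ℤ) = st.length - s := by
  unfold tauStep
  split_ifs with hneg
  · simp only [List.length_cons]; push_cast; omega
  · simp only [List.length_cons, List.length_drop]; omega

theorem lambdaL_tauStep {s : ℤ} (hs : -1 ≤ s) {st : List PTree} (hst : s < st.length) :
    lambdaL (tauStep s st) = s :: lambdaL st := by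
  unfold tauStep
  split_ifs with hneg
  · rw [lambdaL, lambdaT, show s = -1 by omega]; rfl
  · have hk : (st.take (s.toNat + 1)).length = s.toNat + 1 := List.length_take_of_le (by omega)
    rw [lambdaL, lambdaT, hk, List.cons_append, ← lambdaL_append, List.take_append_drop]
    congr 1
    omega

theorem tauStack_spec {P : List ℤ} (hsteps : ∀ s ∈ P, -1 ≤ s) (hneg : NegSuffixSums P) :
    ((tauStack P).length : ℤ) = -P.sum ∧ lambdaL (tauStack P) = P := by
  induction P with
  | nil => exact ⟨rfl, rfl⟩
  | cons s P ih =>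
    have hs := hsteps s List.mem_cons_self
    obtain ⟨hlen, hlam⟩ := ih (fun t ht => hsteps t (List.mem_cons_of_mem s ht))
      (fun n hn => hneg (n + 1) (by simpa using hn))
    have hfits : s < (tauStack P).length := by
      have := hneg 0 (by simp)
      rw [List.drop_zero, List.sum_cons] at this
      omega
    rw [tauStack_eq_foldr, List.foldr_cons, ← tauStack_eq_foldr, List.sum_cons]
    exact ⟨by rw [length_tauStep hs hfits, hlen]; ring, by rw [lambdaL_tauStep hs hfits, hlam]⟩

theorem lambdaT_tau {P : List ℤ} (hP : IsLukas P) : lambdaT (tau P) = P := by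
  obtain ⟨-, hsteps, hneg, hsum⟩ := (isLukas_iff P).mp hP
  obtain ⟨hlen, hlam⟩ := tauStack_spec hsteps hneg
  obtain ⟨T, hT⟩ : ∃ T, tauStack P = [T] :=
    List.length_eq_one_iff.mp (by rw [hsum] at hlen; omega)
  rw [hT] at hlam
  rw [tau, hT]
  simpa [lambdaL] using hlam

end Luka

open Luka in
/-- **Construction 3.1.**  The maps `λ` and `τ` are mutually inverse bijections between
the set of Łukasiewicz paths and the set of plane trees: `λ` sends any plane tree to a
Łukasiewicz path, `τ ∘ λ` is the identity on plane trees, and `λ ∘ τ` is the identity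
on Łukasiewicz paths. -/
theorem lambda_tau_inverse_bijections :
    (∀ T : PTree, IsLukas (lambdaT T)) ∧
    (∀ T : PTree, tau (lambdaT T) = T) ∧
    (∀ P : List ℤ, IsLukas P → lambdaT (tau P) = P) :=
  ⟨isLukas_lambdaT, tau_lambdaT, fun _ => lambdaT_tau⟩
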